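/- Let (s_n)_{n≥1} ⊆ (0,1) satisfy s_2 < 1 - s_1/(1 - s_1) and s_n ≤ s_{n-2}/2 - 2·s_{n-1} for all n ≥ 3, and define c_n := s_n for n odd and c_n := 1 - s_n for n even. Then the Haar function h of the associated RWPS satisfies h(2n) < h(2n-1) for all n ≥ 1; in particular, h is not increasing. -/

import Mathlib

/-!
Since `c (2n-1) = s (2n-1)` and `c (2n) = 1 - s (2n)`, the Haar recursion gives
`h (2n) = h (2n-1) · (1 - s (2n-1)) / (1 - s (2n))`, and this ratio is `< 1` exactly when
`s (2n) < s (2n-1)`. The growth condition forces `s` to decrease strictly from `s 1` on: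
`0 < s (k+2) ≤ s k / 2 - 2 s (k+1)` gives `s (k+1) < s k / 4`.
-/

lemma mul_one_sub_div_one_sub_lt {x s t : ℝ} (hx : 0 < x) (ht : t < 1) (hts : t < s) :
    x * (1 - s) / (1 - t) < x := by
  rw [div_lt_iff₀ (by linarith)]
  nlinarith

section HaarFunction

variable {s c h : ℕ → ℝ}

lemma mem_Ioo_of_parity (hs : ∀ n, 1 ≤ n → s n ∈ Set.Ioo (0 : ℝ) 1)
    (hcodd : ∀ n, 1 ≤ n → Odd n → c n = s n)
    (hceven : ∀ n, 1 ≤ n → Even n → c n = 1 - s n) {n : ℕ} (hn : 1 ≤ n) :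
    c n ∈ Set.Ioo (0 : ℝ) 1 := by
  obtain ⟨hs0, hs1⟩ := hs n hn
  rcases Nat.even_or_odd n with he | ho
  · rw [hceven n hn he]
    constructor <;> linarith
  · rw [hcodd n hn ho]
    exact ⟨hs0, hs1⟩

lemma haar_pos (hc : ∀ n, 1 ≤ n → c n ∈ Set.Ioo (0 : ℝ) 1) (hh1 : h 1 = 1 / c 1)
    (hhrec : ∀ n, 1 ≤ n → h (n + 1) = h n * (1 - c n) / c (n + 1)) {n : ℕ} (hn : 1 ≤ n) :
    0 < h n := by
  induction n, hn using Nat.le_induction with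
  | base => rw [hh1]; exact one_div_pos.mpr (hc 1 le_rfl).1
  | succ m hm ih =>
    rw [hhrec m hm]
    exact div_pos (mul_pos ih (sub_pos.mpr (hc m hm).2)) (hc (m + 1) (by omega)).1

lemma succ_lt_of_le_half_sub (hs : ∀ n, 1 ≤ n → s n ∈ Set.Ioo (0 : ℝ) 1)
    (h2 : ∀ n, 3 ≤ n → s n ≤ s (n - 2) / 2 - 2 * s (n - 1)) {k : ℕ} (hk : 1 ≤ k) :
    s (k + 1) < s k := by
  have hrec : s (k + 2) ≤ s k / 2 - 2 * s (k + 1) := by simpa using h2 (k + 2) (by omega)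
  linarith [(hs k hk).1, (hs (k + 2) (by omega)).1]

end HaarFunction

theorem stmt8_general (s c h : ℕ → ℝ)
    (hs : ∀ n, 1 ≤ n → s n ∈ Set.Ioo (0 : ℝ) 1)
    (h2 : ∀ n, 3 ≤ n → s n ≤ s (n - 2) / 2 - 2 * s (n - 1))
    (hcodd : ∀ n, 1 ≤ n → Odd n → c n = s n)
    (hceven : ∀ n, 1 ≤ n → Even n → c n = 1 - s n)
    (hh1 : h 1 = 1 / c 1)
    (hhrec : ∀ n, 1 ≤ n → h (n + 1) = h n * (1 - c n) / c (n + 1)) :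
    (∀ n : ℕ, 1 ≤ n → h (2 * n) < h (2 * n - 1)) ∧ ¬ Monotone h := by
  have hc : ∀ n, 1 ≤ n → c n ∈ Set.Ioo (0 : ℝ) 1 := fun _ => mem_Ioo_of_parity hs hcodd hceven
  have even_lt_pred : ∀ n : ℕ, 1 ≤ n → h (2 * n) < h (2 * n - 1) := by
    intro n hn
    obtain ⟨m, rfl⟩ : ∃ m, n = m + 1 := ⟨n - 1, by omega⟩
    have hodd : 2 * (m + 1) - 1 = 2 * m + 1 := by omega
    rw [hodd, show 2 * (m + 1) = 2 * m + 1 + 1 by ring, hhrec _ (by omega),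
      hcodd _ (by omega) (odd_two_mul_add_one m), hceven _ (by omega) ⟨m + 1, by ring⟩]
    exact mul_one_sub_div_one_sub_lt (haar_pos hc hh1 hhrec (by omega))
      (hs _ (by omega)).2 (succ_lt_of_le_half_sub hs h2 (by omega))
  exact ⟨even_lt_pred, fun hmono => (even_lt_pred 1 le_rfl).not_ge (hmono (by norm_num : 1 ≤ 2))⟩

theorem stmt8 (s c h : ℕ → ℝ)
    (hs : ∀ n, 1 ≤ n → s n ∈ Set.Ioo (0 : ℝ) 1)
    (h1 : s 2 < 1 - s 1 / (1 - s 1))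
    (h2 : ∀ n, 3 ≤ n → s n ≤ s (n - 2) / 2 - 2 * s (n - 1))
    (hcodd : ∀ n, 1 ≤ n → Odd n → c n = s n)
    (hceven : ∀ n, 1 ≤ n → Even n → c n = 1 - s n)
    (hh0 : h 0 = 1) (hh1 : h 1 = 1 / c 1)
    (hhrec : ∀ n, 1 ≤ n → h (n + 1) = h n * (1 - c n) / c (n + 1)) :
    (∀ n : ℕ, 1 ≤ n → h (2 * n) < h (2 * n - 1)) ∧ ¬ Monotone h :=
  stmt8_general s c h hs h2 hcodd hceven hh1 hhrec
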